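/- arXiv:2204.12082 — 2 statements merged into one kernel-verified Lean document; each statement's English description precedes it below -/
import Mathlib

section
/- Let (x,y) and (x*,y*) be primitive solutions of 0 < |F(x,y)| ≤ h with (x*,y*) ∉ {(x,y), (−x,−y)}, both related to the same r-th root of unity ω, such that u(x,y), v(x,y), u(x*,y*), v(x*,y*) are nonzero, and suppose μ(x,y) and μ(x*,y*) are real (the case D > 0) and ζ(x*,y*) ≤ ζ(x,y). Then Z(x*,y*) ≥ |j|/(2·h^{1/r}). -/
open Complex

noncomputable section

/-- The linear form `αx + βy` evaluated at an integer pair. -/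
def lin (α β : ℂ) (x y : ℤ) : ℂ := α * (x : ℂ) + β * (y : ℂ)

/-- The diagonalizable binary form `F(x,y) = (αx+βy)^r − (γx+δy)^r`. -/
def form (α β γ δ : ℂ) (r : ℕ) (x y : ℤ) : ℂ := lin α β x y ^ r - lin γ δ x y ^ r

/-- `Z(x,y) = max(|u|,|v|)`. -/
def Zmax (α β γ δ : ℂ) (x y : ℤ) : ℝ :=
  max (‖lin α β x y‖) (‖lin γ δ x y‖)

/-- `ζ(x,y) = |F(x,y)| / Z(x,y)^r`. -/
def zetaF (α β γ δ : ℂ) (r : ℕ) (x y : ℤ) : ℝ :=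
  ‖form α β γ δ r x y‖ / Zmax α β γ δ x y ^ r

/-- `μ(x,y) = v^r / u^r`. -/
def muF (α β γ δ : ℂ) (r : ℕ) (x y : ℤ) : ℂ :=
  lin γ δ x y ^ r / lin α β x y ^ r

/-- `F` has integer coefficients: each coefficient
`binom(r,k)·(α^k β^{r−k} − γ^k δ^{r−k})` is a rational integer. -/
def IntCoeffs (α β γ δ : ℂ) (r : ℕ) : Prop :=
  ∀ k ≤ r, ∃ n : ℤ, (r.choose k : ℂ) * (α ^ k * β ^ (r - k) - γ ^ k * δ ^ (r - k)) = (n : ℂ)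

/-- `(x,y)` is a primitive solution of the Thue inequality `0 < |F(x,y)| ≤ h`. -/
def IsPrimSol (α β γ δ : ℂ) (r h : ℕ) (x y : ℤ) : Prop :=
  Int.gcd x y = 1 ∧ 0 < ‖form α β γ δ r x y‖ ∧
    ‖form α β γ δ r x y‖ ≤ (h : ℝ)

/-- The solution `(x,y)` is related to the `r`-th root of unity `ω`: the principal
argument of `(u/v)·ω⁻¹` lies in `(−π/r, π/r]`. -/
def RelatedTo (α β γ δ : ℂ) (r : ℕ) (ω : ℂ) (x y : ℤ) : Prop :=
  (lin α β x y / lin γ δ x y * ω⁻¹).arg ∈ Set.Ioc (-(Real.pi / r)) (Real.pi / r)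

/-!
Write `A = ‖u − ωv‖` and `A* = ‖u* − ωv*‖`. Since `μ` is real and `(u/v)ω⁻¹` has argument in
`(−π/r, π/r]`, that argument is `0` or `π/r`, and in both cases an elementary inequality gives
`A^r ≤ |F| ≤ h`. Hence `A ≤ h^{1/r}`, and `ζ* ≤ ζ` upgrades the same bound at `(x*,y*)` to
`A*·Z ≤ h^{1/r}·Z*`. On the other hand `u v* − u* v = j·(x y* − x* y)` with a nonzero integer
determinant (the solutions are primitive and distinct up to sign), and
`u v* − u* v = (u − ωv) v* − (u* − ωv*) v`, so `|j| ≤ A·Z* + A*·Z ≤ 2 h^{1/r} Z*`.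
-/

open scoped Real

lemma abs_sub_one_pow_le_abs_pow_sub_one {r : ℕ} (hr : r ≠ 0) {s : ℝ} (hs : 0 ≤ s) :
    |s - 1| ^ r ≤ |s ^ r - 1| := by
  rcases le_total s 1 with hs1 | hs1
  · have := pow_add_pow_le (sub_nonneg.2 hs1) hs hr
    rw [sub_add_cancel, one_pow] at this
    rw [abs_sub_comm, abs_sub_comm (s ^ r), abs_of_nonneg (by linarith),
      abs_of_nonneg (by linarith [pow_le_one₀ hs hs1 (n := r)])]
    linarith
  · have := pow_add_pow_le (sub_nonneg.2 hs1) zero_le_one hr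
    rw [sub_add_cancel, one_pow] at this
    rw [abs_of_nonneg (by linarith), abs_of_nonneg (by linarith [one_le_pow₀ hs1 (n := r)])]
    linarith

lemma sq_sub_two_mul_cos_pi_div_add_one_pow_le {r : ℕ} (hr : 2 ≤ r) {s : ℝ} (hs : 0 ≤ s) :
    (s ^ 2 - 2 * s * Real.cos (π / r) + 1) ^ r ≤ (s ^ r + 1) ^ 2 := by
  obtain rfl | hr3 := hr.eq_or_lt
  · simp [Real.cos_pi_div_two]
  have hc : 1 / 2 ≤ Real.cos (π / r) := by
    rw [← Real.cos_pi_div_three]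
    refine Real.cos_le_cos_of_nonneg_of_le_pi (by positivity) (by linarith [Real.pi_pos]) ?_
    exact div_le_div_of_nonneg_left Real.pi_pos.le (by norm_num) (by exact_mod_cast hr3)
  have hbase : 0 ≤ s ^ 2 - 2 * s * Real.cos (π / r) + 1 := by
    nlinarith [Real.cos_le_one (π / r), sq_nonneg (s - 1)]
  rcases le_total s 1 with hs1 | hs1
  · calc (s ^ 2 - 2 * s * Real.cos (π / r) + 1) ^ r ≤ 1 := pow_le_one₀ hbase (by nlinarith)
      _ ≤ (s ^ r + 1) ^ 2 := by nlinarith [pow_nonneg hs r]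
  · calc (s ^ 2 - 2 * s * Real.cos (π / r) + 1) ^ r ≤ (s ^ 2) ^ r :=
          pow_le_pow_left₀ hbase (by nlinarith) r
      _ = (s ^ r) ^ 2 := pow_right_comm s 2 r
      _ ≤ (s ^ r + 1) ^ 2 := pow_le_pow_left₀ (by positivity) (by linarith) 2

namespace Complex

lemma sq_norm_sub_one (z : ℂ) : ‖z - 1‖ ^ 2 = ‖z‖ ^ 2 - 2 * ‖z‖ * Real.cos (arg z) + 1 := by
  rw [mul_assoc, norm_mul_cos_arg, ← normSq_eq_norm_sq, ← normSq_eq_norm_sq, normSq_sub]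
  simp only [map_one, mul_one]
  ring

lemma arg_pow_of_mem_Ioc {r : ℕ} (hr : r ≠ 0) {t : ℂ} (ht : arg t ∈ Set.Ioc (-(π / r)) (π / r)) :
    arg (t ^ r) = r * arg t := by
  have hr' : (0 : ℝ) < r := by positivity
  rw [← arg_coe_angle_toReal_eq_arg, arg_pow_coe_angle, ← Real.Angle.coe_nsmul, nsmul_eq_mul,
    Real.Angle.toReal_coe_eq_self_iff_mem_Ioc]
  obtain ⟨hlo, hhi⟩ := ht
  constructor
  · have := mul_lt_mul_of_pos_left hlo hr'
    rwa [mul_neg, mul_div_cancel₀ _ hr'.ne'] at this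
  · have := mul_le_mul_of_nonneg_left hhi hr'.le
    rwa [mul_div_cancel₀ _ hr'.ne'] at this

/-- `r · arg t = arg (t ^ r)` is the argument of a nonzero real number, so it is `0` or `π`. -/
lemma arg_eq_zero_or_eq_pi_div_of_im_pow_eq_zero {r : ℕ} (hr : r ≠ 0) {t : ℂ} (ht : t ≠ 0)
    (htr : (t ^ r).im = 0) (harg : arg t ∈ Set.Ioc (-(π / r)) (π / r)) :
    arg t = 0 ∨ arg t = π / r := by
  have hr' : (r : ℝ) ≠ 0 := by exact_mod_cast hr
  have hre : (t ^ r).re ≠ 0 := fun h0 => pow_ne_zero r ht (ext h0 htr)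
  rcases hre.lt_or_gt with hneg | hpos
  · right
    have := arg_eq_pi_iff.2 ⟨hneg, htr⟩
    rw [arg_pow_of_mem_Ioc hr harg] at this
    field_simp
    linarith
  · left
    have := arg_eq_zero_iff.2 ⟨hpos.le, htr⟩
    rw [arg_pow_of_mem_Ioc hr harg] at this
    exact (mul_eq_zero.1 this).resolve_left hr'

lemma norm_sub_one_pow_le_norm_pow_sub_one {r : ℕ} (hr : 2 ≤ r) {t : ℂ} (ht : t ≠ 0)
    (htr : (t ^ r).im = 0) (harg : arg t ∈ Set.Ioc (-(π / r)) (π / r)) :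
    ‖t - 1‖ ^ r ≤ ‖t ^ r - 1‖ := by
  have hr0 : r ≠ 0 := by omega
  refine le_of_pow_le_pow_left₀ two_ne_zero (norm_nonneg _) ?_
  rw [← pow_mul, mul_comm, pow_mul, sq_norm_sub_one, sq_norm_sub_one, arg_pow_of_mem_Ioc hr0 harg,
    norm_pow]
  rcases arg_eq_zero_or_eq_pi_div_of_im_pow_eq_zero hr0 ht htr harg with h | h <;> rw [h]
  · have := pow_le_pow_left₀ (by positivity)
      (abs_sub_one_pow_le_abs_pow_sub_one hr0 (norm_nonneg t)) 2
    rw [← pow_mul, mul_comm, pow_mul, sq_abs, sq_abs] at this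
    simpa [sub_sq] using this
  · rw [mul_div_cancel₀ _ (by exact_mod_cast hr0), Real.cos_pi]
    exact (sq_sub_two_mul_cos_pi_div_add_one_pow_le hr (norm_nonneg t)).trans_eq (by ring)

lemma norm_sub_mul_pow_le_norm_pow_sub_pow {r : ℕ} (hr : 2 ≤ r) {u v ω : ℂ} (hu : u ≠ 0)
    (hv : v ≠ 0) (hω : ω ^ r = 1) (him : (v ^ r / u ^ r).im = 0)
    (harg : arg (u / v * ω⁻¹) ∈ Set.Ioc (-(π / r)) (π / r)) :
    ‖u - ω * v‖ ^ r ≤ ‖u ^ r - v ^ r‖ := by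
  have hω0 : ω ≠ 0 := by rintro rfl; simp [zero_pow (by omega : r ≠ 0)] at hω
  set t := u / v * ω⁻¹
  have htr : t ^ r = u ^ r / v ^ r := by rw [mul_pow, div_pow, inv_pow, hω, inv_one, mul_one]
  have htim : (t ^ r).im = 0 := by rw [htr, ← inv_div, inv_im, him, neg_zero, zero_div]
  have hk := norm_sub_one_pow_le_norm_pow_sub_one hr (by simp [t, hu, hv, hω0]) htim harg
  have e1 : u - ω * v = ω * v * (t - 1) := by simp only [t]; field_simp
  have e2 : u ^ r - v ^ r = v ^ r * (t ^ r - 1) := by rw [htr]; field_simp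
  rw [e1, e2, norm_mul, norm_mul, norm_mul, norm_eq_one_of_pow_eq_one hω (by omega), one_mul,
    mul_pow, norm_pow]
  gcongr

end Complex

lemma Int.eq_or_eq_neg_of_mul_eq_mul {x y xs ys : ℤ} (h : IsCoprime x y) (hs : IsCoprime xs ys)
    (hxy : x * ys = xs * y) : (xs, ys) = (x, y) ∨ (xs, ys) = (-x, -y) := by
  obtain ⟨a, b, hab⟩ := h
  have hxs : xs = (a * xs + b * ys) * x := by linear_combination (-xs) * hab - b * hxy
  have hys : ys = (a * xs + b * ys) * y := by linear_combination (-ys) * hab + a * hxy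
  rcases Int.isUnit_iff.1 (hs.isUnit_of_dvd' ⟨x, hxs⟩ ⟨y, hys⟩) with hk | hk <;>
    rw [hk] at hxs hys <;> simp [hxs, hys]

lemma lin_mul_lin_sub_lin_mul_lin (α β γ δ : ℂ) (x y xs ys : ℤ) :
    lin α β x y * lin γ δ xs ys - lin α β xs ys * lin γ δ x y =
      (α * δ - β * γ) * ((x * ys - xs * y : ℤ) : ℂ) := by
  simp only [lin]
  push_cast
  ring

lemma norm_det_le_norm_lin_mul_sub {α β γ δ : ℂ} {x y xs ys : ℤ} (h : Int.gcd x y = 1)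
    (hs : Int.gcd xs ys = 1) (hne : (xs, ys) ≠ (x, y) ∧ (xs, ys) ≠ (-x, -y)) :
    ‖α * δ - β * γ‖ ≤ ‖lin α β x y * lin γ δ xs ys - lin α β xs ys * lin γ δ x y‖ := by
  have hdet : x * ys - xs * y ≠ 0 := fun h0 =>
    (Int.eq_or_eq_neg_of_mul_eq_mul (Int.isCoprime_iff_gcd_eq_one.2 h)
      (Int.isCoprime_iff_gcd_eq_one.2 hs) (sub_eq_zero.1 h0)).elim hne.1 hne.2
  rw [lin_mul_lin_sub_lin_mul_lin, norm_mul, norm_intCast]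
  refine le_mul_of_one_le_right (norm_nonneg _) ?_
  exact_mod_cast Int.one_le_abs hdet

lemma norm_mul_sub_mul_le (u v us vs ω : ℂ) :
    ‖u * vs - us * v‖ ≤ ‖u - ω * v‖ * ‖vs‖ + ‖us - ω * vs‖ * ‖v‖ := by
  rw [show u * vs - us * v = (u - ω * v) * vs - (us - ω * vs) * v by ring, ← norm_mul, ← norm_mul]
  exact norm_sub_le _ _

theorem Zstar_lower_bound_Dpos_general (r h : ℕ) (hr : 2 ≤ r)
    (α β γ δ j : ℂ) (hj : j = α * δ - β * γ)
    (x y xs ys : ℤ)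
    (hsol : IsPrimSol α β γ δ r h x y) (hsols : IsPrimSol α β γ δ r h xs ys)
    (hne : (xs, ys) ≠ (x, y) ∧ (xs, ys) ≠ (-x, -y))
    (hu : lin α β x y ≠ 0) (hv : lin γ δ x y ≠ 0)
    (hus : lin α β xs ys ≠ 0) (hvs : lin γ δ xs ys ≠ 0)
    (hμ : (muF α β γ δ r x y).im = 0) (hμs : (muF α β γ δ r xs ys).im = 0)
    (ω : ℂ) (hω : ω ^ r = 1)
    (hrel : RelatedTo α β γ δ r ω x y) (hrels : RelatedTo α β γ δ r ω xs ys)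
    (hζ : zetaF α β γ δ r xs ys ≤ zetaF α β γ δ r x y) :
    ‖j‖ / (2 * (h : ℝ) ^ (1 / (r : ℝ))) ≤ Zmax α β γ δ xs ys := by
  obtain ⟨hcop, -, hFh⟩ := hsol
  obtain ⟨hcops, -, -⟩ := hsols
  have hr0 : r ≠ 0 := by omega
  set H := (h : ℝ) ^ (1 / (r : ℝ))
  have hHr : H ^ r = h := by
    simp only [H, one_div]
    exact Real.rpow_inv_natCast_pow (Nat.cast_nonneg h) hr0
  set Z := Zmax α β γ δ x y
  set Zs := Zmax α β γ δ xs ys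
  have hZ : 0 < Z := (norm_pos_iff.2 hu).trans_le (le_max_left _ _)
  have hZs : 0 < Zs := (norm_pos_iff.2 hus).trans_le (le_max_left _ _)
  have hA : ‖lin α β x y - ω * lin γ δ x y‖ ≤ H :=
    le_of_pow_le_pow_left₀ hr0 (by positivity) <| hHr ▸
      (Complex.norm_sub_mul_pow_le_norm_pow_sub_pow hr hu hv hω hμ hrel).trans hFh
  have hAs : ‖lin α β xs ys - ω * lin γ δ xs ys‖ * Z ≤ H * Zs := by
    refine le_of_pow_le_pow_left₀ hr0 (by positivity) ?_
    rw [mul_pow, mul_pow, hHr]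
    calc _ ≤ ‖form α β γ δ r xs ys‖ * Z ^ r := by
          gcongr; exact Complex.norm_sub_mul_pow_le_norm_pow_sub_pow hr hus hvs hω hμs hrels
      _ ≤ ‖form α β γ δ r x y‖ * Zs ^ r := (div_le_div_iff₀ (by positivity) (by positivity)).1 hζ
      _ ≤ h * Zs ^ r := by gcongr
  refine div_le_of_le_mul₀ (by positivity) hZs.le ?_
  calc ‖j‖ ≤ ‖lin α β x y * lin γ δ xs ys - lin α β xs ys * lin γ δ x y‖ :=
        hj ▸ norm_det_le_norm_lin_mul_sub hcop hcops hne
    _ ≤ ‖lin α β x y - ω * lin γ δ x y‖ * Zs + ‖lin α β xs ys - ω * lin γ δ xs ys‖ * Z :=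
        (norm_mul_sub_mul_le _ _ _ _ ω).trans (by gcongr <;> exact le_max_right _ _)
    _ ≤ Zs * (2 * H) := by nlinarith

/-- (Case `D > 0`: `μ` real.) Let `(x,y)`, `(x*,y*)` be primitive
solutions of `0 < |F| ≤ h`, distinct up to sign, both related to the same `r`-th root of
unity `ω`, with `u, v` nonzero at both solutions, `μ(x,y)` and `μ(x*,y*)` real, and
`ζ(x*,y*) ≤ ζ(x,y)`. Then `Z(x*,y*) ≥ |j|/(2·h^{1/r})`. -/
theorem Zstar_lower_bound_Dpos (r h : ℕ) (hr : 2 ≤ r) (hh : 1 ≤ h)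
    (α β γ δ j : ℂ) (hj : j = α * δ - β * γ) (hj0 : j ≠ 0) (hint : IntCoeffs α β γ δ r)
    (x y xs ys : ℤ)
    (hsol : IsPrimSol α β γ δ r h x y) (hsols : IsPrimSol α β γ δ r h xs ys)
    (hne : (xs, ys) ≠ (x, y) ∧ (xs, ys) ≠ (-x, -y))
    (hu : lin α β x y ≠ 0) (hv : lin γ δ x y ≠ 0)
    (hus : lin α β xs ys ≠ 0) (hvs : lin γ δ xs ys ≠ 0)
    (hμ : (muF α β γ δ r x y).im = 0) (hμs : (muF α β γ δ r xs ys).im = 0)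
    (ω : ℂ) (hω : ω ^ r = 1)
    (hrel : RelatedTo α β γ δ r ω x y) (hrels : RelatedTo α β γ δ r ω xs ys)
    (hζ : zetaF α β γ δ r xs ys ≤ zetaF α β γ δ r x y) :
    ‖j‖ / (2 * (h : ℝ) ^ (1 / (r : ℝ))) ≤ Zmax α β γ δ xs ys :=
  Zstar_lower_bound_Dpos_general r h hr α β γ δ j hj x y xs ys hsol hsols hne hu hv hus hvs hμ hμs ω
    hω hrel hrels hζ
end
end

section
/- Assume γ is the complex conjugate of α and δ is the complex conjugate of β (so v(x,y) is the complex conjugate of u(x,y) for every (x,y) ∈ ℤ²; this is the case D < 0), and let r ≥ 3. Let (x',y') and (x,y) be primitive solutions of 0 < |F(x,y)| ≤ h, distinct up to sign, both related to the same r-th root of unity ω, with ζ(x,y) ≤ ζ(x',y'). Then Z(x,y) ≥ (|j|/(2h))·Z(x',y')^{r−1}. -/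
open Complex

noncomputable section

/-!
Write `u = αx + βy`, so that `v = ū` and `Z = |u|`. Being related to `ω` means
`u = ū ω e^{it}` with `|t| ≤ π/r`, hence `ζ = |e^{irt} - 1| ≥ (2/π) r |t|` by Jordan's inequality.
For two solutions, `u ū' - u' ū = j (x y' - x' y)` has modulus at least `|j|`, since primitive
solutions that differ up to sign are not proportional; on the other hand it equals
`ū ū' ω (e^{it} - e^{it'})`, of modulus at most
`Z Z' |t - t'| ≤ (π / 2r) Z Z' (ζ + ζ') ≤ (π / r) Z Z' ζ'`.
Multiplying by `Z'^{r-1}` and using `ζ' Z'^r = |F(x',y')| ≤ h` gives `r |j| Z'^{r-1} ≤ π h Z`,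
and `π / r < 2`.
-/

open ComplexConjugate

theorem Int.eq_or_eq_neg_of_mul_eq_mul_s10 {x y x' y' : ℤ} (hxy : Int.gcd x y = 1)
    (hxy' : Int.gcd x' y' = 1) (h : x * y' = x' * y) : (x, y) = (x', y') ∨ (x, y) = (-x', -y') := by
  obtain ⟨a, b, hab⟩ := Int.isCoprime_iff_gcd_eq_one.mpr hxy'
  have hx : x = (a * x + b * y) * x' := by linear_combination -x * hab + b * h
  have hy : y = (a * x + b * y) * y' := by linear_combination -y * hab - a * h
  have hk : 1 = (a * x + b * y).natAbs := by
    simpa [← hx, ← hy, hxy, hxy'] using Int.gcd_mul_left (a * x + b * y) x' y'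
  rcases Int.natAbs_eq_iff.mp hk.symm with hk | hk <;> rw [hk] at hx hy
  · left; simp [hx, hy]
  · right; simp [hx, hy]

theorem eq_mul_exp_I_mul_arg_div {z w : ℂ} (hw : w ≠ 0) (h : ‖z‖ = ‖w‖) :
    z = w * exp (I * arg (z / w)) := by
  have hzw : ‖z / w‖ = 1 := by rw [norm_div, h, div_self (norm_ne_zero_iff.mpr hw)]
  have := norm_mul_exp_arg_mul_I (z / w)
  rw [hzw, ofReal_one, one_mul, mul_comm] at this
  rw [this, mul_div_cancel₀ _ hw]

theorem norm_exp_I_mul_sub_exp_I_mul_le (s t : ℝ) :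
    ‖exp (I * s) - exp (I * t)‖ ≤ |s - t| := by
  have : exp (I * s) - exp (I * t) = exp (I * t) * (exp (I * ↑(s - t)) - 1) := by
    rw [mul_sub, mul_one, ← exp_add]; push_cast; ring_nf
  rw [this, norm_mul, norm_exp_I_mul_ofReal, one_mul, ← Real.norm_eq_abs]
  exact Real.norm_exp_I_mul_ofReal_sub_one_le

/-- Jordan's inequality `sin x ≥ 2x/π` on `[0, π/2]`, read on the unit circle. -/
theorem abs_le_pi_div_two_mul_norm_exp_I_mul_sub_one {φ : ℝ} (hφ : |φ| ≤ Real.pi) :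
    |φ| ≤ Real.pi / 2 * ‖exp (I * φ) - 1‖ := by
  have hsin := Real.mul_abs_le_abs_sin (x := φ / 2) (by rw [abs_div, abs_two]; linarith)
  rw [norm_exp_I_mul_ofReal_sub_one, norm_mul, Real.norm_eq_abs, Real.norm_eq_abs, abs_two]
  rw [abs_div, abs_two] at hsin
  field_simp at hsin ⊢
  nlinarith [Real.pi_pos]

theorem norm_pow_sub_conj_pow {u ω : ℂ} {r : ℕ} {t : ℝ} (hω : ω ^ r = 1)
    (hu : u = conj u * ω * exp (I * t)) :
    ‖u ^ r - conj u ^ r‖ = ‖u‖ ^ r * ‖exp (I * (r * t : ℝ)) - 1‖ := by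
  have : u ^ r - conj u ^ r = conj u ^ r * (exp (I * (r * t : ℝ)) - 1) := by
    conv_lhs => enter [1]; rw [hu]
    rw [mul_pow, mul_pow, hω, ← exp_nat_mul]; push_cast; ring_nf
  rw [this, norm_mul, norm_pow, Complex.norm_conj]

theorem norm_mul_conj_sub_mul_conj_le {u u' ω : ℂ} {t t' : ℝ} (hω : ‖ω‖ = 1)
    (hu : u = conj u * ω * exp (I * t)) (hu' : u' = conj u' * ω * exp (I * t')) :
    ‖u * conj u' - u' * conj u‖ ≤ ‖u‖ * ‖u'‖ * |t - t'| := by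
  have : u * conj u' - u' * conj u = conj u * conj u' * ω * (exp (I * t) - exp (I * t')) := by
    linear_combination conj u' * hu - conj u * hu'
  rw [this, norm_mul, norm_mul, norm_mul, Complex.norm_conj, Complex.norm_conj, hω, mul_one]
  gcongr
  exact norm_exp_I_mul_sub_exp_I_mul_le t t'

theorem lin_conj (α β : ℂ) (x y : ℤ) : lin (conj α) (conj β) x y = conj (lin α β x y) := by
  simp [lin]

theorem Zmax_conj (α β : ℂ) (x y : ℤ) : Zmax α β (conj α) (conj β) x y = ‖lin α β x y‖ := by
  rw [Zmax, lin_conj, Complex.norm_conj, max_self]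

theorem lin_mul_conj_sub (α β : ℂ) (x y x' y' : ℤ) :
    lin α β x y * conj (lin α β x' y') - lin α β x' y' * conj (lin α β x y) =
      (α * conj β - β * conj α) * ((x * y' - x' * y : ℤ) : ℂ) := by
  simp only [lin, map_add, map_mul, map_intCast]; push_cast; ring

theorem exists_angle_of_relatedTo {α β ω : ℂ} {r : ℕ} (hr : r ≠ 0) (hω : ω ^ r = 1) {x y : ℤ}
    (hF : 0 < ‖form α β (conj α) (conj β) r x y‖)
    (hrel : RelatedTo α β (conj α) (conj β) r ω x y) :
    ∃ t : ℝ, lin α β x y = conj (lin α β x y) * ω * exp (I * t) ∧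
      r * |t| ≤ Real.pi / 2 * zetaF α β (conj α) (conj β) r x y := by
  set u := lin α β x y
  have hform : form α β (conj α) (conj β) r x y = u ^ r - conj u ^ r := by
    rw [form, lin_conj]
  have hu : u ≠ 0 := by
    rintro hu
    simp [hform, hu, zero_pow hr] at hF
  have hωn : ‖ω‖ = 1 := norm_eq_one_of_pow_eq_one hω hr
  have hut := eq_mul_exp_I_mul_arg_div (z := u) (w := conj u * ω)
    (mul_ne_zero ((map_ne_zero _).mpr hu) (by rintro rfl; simp at hωn)) (by simp [hωn])
  have ht : |arg (u / (conj u * ω))| ≤ Real.pi / r := by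
    rw [RelatedTo, lin_conj, ← div_eq_mul_inv, div_div] at hrel
    exact abs_le.mpr ⟨hrel.1.le, hrel.2⟩
  generalize arg (u / (conj u * ω)) = t at hut ht
  refine ⟨t, hut, ?_⟩
  have hrt : |(r * t : ℝ)| ≤ Real.pi := by
    rw [abs_mul, Nat.abs_cast]
    exact (le_div_iff₀' (by positivity)).mp ht
  rw [zetaF, hform, Zmax_conj, norm_pow_sub_conj_pow hω hut,
    mul_div_cancel_left₀ _ (pow_ne_zero _ (norm_ne_zero_iff.mpr hu))]
  simpa only [abs_mul, Nat.abs_cast] using abs_le_pi_div_two_mul_norm_exp_I_mul_sub_one hrt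

theorem Zmax_nonneg (α β γ δ : ℂ) (x y : ℤ) : 0 ≤ Zmax α β γ δ x y :=
  (norm_nonneg _).trans (le_max_left _ _)

theorem zetaF_mul_Zmax_pow {α β γ δ : ℂ} {r : ℕ} {x y : ℤ}
    (hF : form α β γ δ r x y ≠ 0) :
    zetaF α β γ δ r x y * Zmax α β γ δ x y ^ r = ‖form α β γ δ r x y‖ := by
  have hZ : Zmax α β γ δ x y ≠ 0 := by
    intro hZ
    have hu := norm_le_zero_iff.mp ((le_max_left _ _).trans hZ.le)
    have hv := norm_le_zero_iff.mp ((le_max_right _ _).trans hZ.le)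
    exact hF (by rw [form, hu, hv, sub_self])
  exact div_mul_cancel₀ _ (pow_ne_zero _ hZ)

theorem mul_norm_le_of_relatedTo {α β ω : ℂ} {r : ℕ} (hr : r ≠ 0) (hω : ω ^ r = 1)
    {x y x' y' : ℤ} (hg : Int.gcd x y = 1) (hg' : Int.gcd x' y' = 1)
    (hne : (x, y) ≠ (x', y') ∧ (x, y) ≠ (-x', -y'))
    (hF : 0 < ‖form α β (conj α) (conj β) r x y‖) (hF' : 0 < ‖form α β (conj α) (conj β) r x' y'‖)
    (hrel : RelatedTo α β (conj α) (conj β) r ω x y)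
    (hrel' : RelatedTo α β (conj α) (conj β) r ω x' y') :
    r * ‖α * conj β - β * conj α‖ ≤
      Zmax α β (conj α) (conj β) x y * Zmax α β (conj α) (conj β) x' y' *
        (Real.pi / 2 * (zetaF α β (conj α) (conj β) r x y + zetaF α β (conj α) (conj β) r x' y'))
      := by
  obtain ⟨t, hut, ht⟩ := exists_angle_of_relatedTo hr hω hF hrel
  obtain ⟨t', hut', ht'⟩ := exists_angle_of_relatedTo hr hω hF' hrel'
  have hdet : (1 : ℝ) ≤ ‖((x * y' - x' * y : ℤ) : ℂ)‖ := by
    rw [norm_intCast]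
    refine mod_cast Int.one_le_abs (sub_ne_zero.mpr fun h ↦ ?_)
    exact (Int.eq_or_eq_neg_of_mul_eq_mul_s10 hg hg' h).elim hne.1 hne.2
  have hj : ‖α * conj β - β * conj α‖ ≤ ‖lin α β x y‖ * ‖lin α β x' y'‖ * |t - t'| := calc
    _ ≤ ‖α * conj β - β * conj α‖ * ‖((x * y' - x' * y : ℤ) : ℂ)‖ :=
      le_mul_of_one_le_right (norm_nonneg _) hdet
    _ = ‖lin α β x y * conj (lin α β x' y') - lin α β x' y' * conj (lin α β x y)‖ := by
      rw [lin_mul_conj_sub, norm_mul]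
    _ ≤ _ := norm_mul_conj_sub_mul_conj_le (norm_eq_one_of_pow_eq_one hω hr) hut hut'
  have hZZ' := mul_nonneg (norm_nonneg (lin α β x y)) (norm_nonneg (lin α β x' y'))
  rw [Zmax_conj, Zmax_conj]
  calc (r : ℝ) * ‖α * conj β - β * conj α‖
      ≤ r * (‖lin α β x y‖ * ‖lin α β x' y'‖ * (|t| + |t'|)) := by
        gcongr
        exact hj.trans (mul_le_mul_of_nonneg_left (abs_sub t t') hZZ')
    _ = ‖lin α β x y‖ * ‖lin α β x' y'‖ * (r * |t| + r * |t'|) := by ring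
    _ ≤ _ := mul_le_mul_of_nonneg_left (by linarith) hZZ'

theorem natCast_mul_norm_mul_Zmax_pow_le {α β ω : ℂ} {r h : ℕ} (hr : r ≠ 0) (hω : ω ^ r = 1)
    {x y x' y' : ℤ} (hsol : IsPrimSol α β (conj α) (conj β) r h x y)
    (hsol' : IsPrimSol α β (conj α) (conj β) r h x' y')
    (hne : (x, y) ≠ (x', y') ∧ (x, y) ≠ (-x', -y'))
    (hrel : RelatedTo α β (conj α) (conj β) r ω x y)
    (hrel' : RelatedTo α β (conj α) (conj β) r ω x' y')
    (hζ : zetaF α β (conj α) (conj β) r x y ≤ zetaF α β (conj α) (conj β) r x' y') :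
    r * (‖α * conj β - β * conj α‖ * Zmax α β (conj α) (conj β) x' y' ^ (r - 1)) ≤
      Real.pi * Zmax α β (conj α) (conj β) x y * h := by
  obtain ⟨hg, hF, -⟩ := hsol
  obtain ⟨hg', hF', hFh'⟩ := hsol'
  have hdet := mul_norm_le_of_relatedTo hr hω hg hg' hne hF hF' hrel hrel'
  have hζh := zetaF_mul_Zmax_pow (norm_pos_iff.mp hF') ▸ hFh'
  set Z := Zmax α β (conj α) (conj β) x y
  set Z' := Zmax α β (conj α) (conj β) x' y'
  set ζ' := zetaF α β (conj α) (conj β) r x' y'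
  have hZ : 0 ≤ Z := Zmax_nonneg ..
  have hZ' : 0 ≤ Z' := Zmax_nonneg ..
  calc (r : ℝ) * (‖α * conj β - β * conj α‖ * Z' ^ (r - 1))
      ≤ Z * Z' * (Real.pi / 2 * (ζ' + ζ')) * Z' ^ (r - 1) := by
        rw [← mul_assoc]
        refine mul_le_mul_of_nonneg_right (hdet.trans ?_) (pow_nonneg hZ' _)
        exact mul_le_mul_of_nonneg_left (by gcongr) (mul_nonneg hZ hZ')
    _ = Real.pi * Z * (ζ' * (Z' * Z' ^ (r - 1))) := by ring
    _ = Real.pi * Z * (ζ' * Z' ^ r) := by rw [← pow_succ', Nat.sub_add_cancel (by omega)]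
    _ ≤ Real.pi * Z * h := mul_le_mul_of_nonneg_left hζh (mul_nonneg Real.pi_pos.le hZ)

theorem gap_principle_Dneg_general (r h : ℕ) (hr : 3 ≤ r)
    (α β γ δ j : ℂ) (hγ : γ = (starRingEnd ℂ) α) (hδ : δ = (starRingEnd ℂ) β)
    (hj : j = α * δ - β * γ)
    (x' y' x y : ℤ)
    (hsol' : IsPrimSol α β γ δ r h x' y') (hsol : IsPrimSol α β γ δ r h x y)
    (hne : (x, y) ≠ (x', y') ∧ (x, y) ≠ (-x', -y'))
    (ω : ℂ) (hω : ω ^ r = 1)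
    (hrel' : RelatedTo α β γ δ r ω x' y') (hrel : RelatedTo α β γ δ r ω x y)
    (hζ : zetaF α β γ δ r x y ≤ zetaF α β γ δ r x' y') :
    ‖j‖ / (2 * (h : ℝ)) * Zmax α β γ δ x' y' ^ (r - 1) ≤ Zmax α β γ δ x y := by
  subst hγ hδ hj
  have key := natCast_mul_norm_mul_Zmax_pow_le (by omega) hω hsol hsol' hne hrel hrel' hζ
  have hpos : (0 : ℝ) < h := hsol.2.1.trans_le hsol.2.2
  have hr' : (3 : ℝ) ≤ r := by exact_mod_cast hr
  rw [div_mul_eq_mul_div, div_le_iff₀ (by positivity)]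
  nlinarith [Real.pi_lt_four, mul_nonneg (Zmax_nonneg α β (conj α) (conj β) x y) hpos.le,
    mul_nonneg (norm_nonneg (α * conj β - β * conj α))
      (pow_nonneg (Zmax_nonneg α β (conj α) (conj β) x' y') (r - 1))]

/-- (Gap principle, case `D < 0`: `γ = conj α`, `δ = conj β`.) Let
`r ≥ 3` and let `(x',y')`, `(x,y)` be primitive solutions of `0 < |F| ≤ h`, distinct up
to sign, both related to the same `r`-th root of unity `ω`, with `ζ(x,y) ≤ ζ(x',y')`.
Then `Z(x,y) ≥ (|j|/(2h))·Z(x',y')^{r−1}`. -/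
theorem gap_principle_Dneg (r h : ℕ) (hr : 3 ≤ r) (hh : 1 ≤ h)
    (α β γ δ j : ℂ) (hγ : γ = (starRingEnd ℂ) α) (hδ : δ = (starRingEnd ℂ) β)
    (hj : j = α * δ - β * γ) (hj0 : j ≠ 0) (hint : IntCoeffs α β γ δ r)
    (x' y' x y : ℤ)
    (hsol' : IsPrimSol α β γ δ r h x' y') (hsol : IsPrimSol α β γ δ r h x y)
    (hne : (x, y) ≠ (x', y') ∧ (x, y) ≠ (-x', -y'))
    (ω : ℂ) (hω : ω ^ r = 1)
    (hrel' : RelatedTo α β γ δ r ω x' y') (hrel : RelatedTo α β γ δ r ω x y)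
    (hζ : zetaF α β γ δ r x y ≤ zetaF α β γ δ r x' y') :
    ‖j‖ / (2 * (h : ℝ)) * Zmax α β γ δ x' y' ^ (r - 1) ≤ Zmax α β γ δ x y :=
  gap_principle_Dneg_general r h hr α β γ δ j hγ hδ hj x' y' x y hsol' hsol hne ω hω hrel' hrel hζ
end
end
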